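/- Frank–Wolfe duality gap bound: under the same assumptions, with Ψ_N = max_{k=0,…,N} { Ψ(f^k) + ⟨∇Ψ(f^k), y^k - f^k⟩ }, one has Ψ_N ≤ min_{f∈Δ} Ψ(f) and hence Ψ(f^N) - min_{f∈Δ} Ψ(f) ≤ Ψ(f^N) - Ψ_N ≤ 2LR²/(N+1). -/

import Mathlib

open Finset
open Set


variable {E : Type*} [NormedAddCommGroup E] [InnerProductSpace ℝ E]

/-- gradient inequality for convex differentiable functions -/
lemma fw_grad_ineq {Δ : Set E} {Ψ : E → ℝ}
    (hΨconv : ConvexOn ℝ Δ Ψ) (hΨdiff : Differentiable ℝ Ψ)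
    {a b : E} (ha : a ∈ Δ) (hb : b ∈ Δ) :
    Ψ a + fderiv ℝ Ψ a (b - a) ≤ Ψ b := by
  let g : ℝ →ᵃ[ℝ] E := AffineMap.lineMap a b
  have hg0 : g 0 = a := AffineMap.lineMap_apply_zero a b
  have hg1 : g 1 = b := AffineMap.lineMap_apply_one a b
  have h_maps : Set.MapsTo g (Icc 0 1) Δ := by
    simpa only [g, Set.mapsTo_iff_image_subset, ← segment_eq_image_lineMap] using
      hΨconv.1.segment_subset ha hb
  have hconv : ConvexOn ℝ (Icc (0:ℝ) 1) (Ψ ∘ g) :=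
    (hΨconv.comp_affineMap g).subset h_maps (convex_Icc 0 1)
  have hderiv : HasDerivAt (Ψ ∘ g) (fderiv ℝ Ψ a (b - a)) 0 := by
    have hc : HasDerivAt (fun t : ℝ => g t) (b - a) 0 := by
      have h1 : (fun t : ℝ => g t) = fun t : ℝ => a + t • (b - a) := by
        funext t
        simp only [g, AffineMap.lineMap_apply_module]
        module
      rw [h1]
      simpa using ((hasDerivAt_id (0:ℝ)).smul_const (b - a)).const_add a
    have := (hΨdiff (g 0)).hasFDerivAt.comp_hasDerivAt 0 hc
    simpa [hg0] using this
  have := hconv.le_slope_of_hasDerivAt (left_mem_Icc.2 zero_le_one)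
    (right_mem_Icc.2 zero_le_one) one_pos hderiv
  rw [slope_def_field] at this
  simp only [Function.comp_apply, hg0, hg1] at this
  have : fderiv ℝ Ψ a (b - a) ≤ Ψ b - Ψ a := by
    simpa [div_one] using this
  linarith

/-- descent lemma -/
lemma fw_descent {Δ : Set E} {Ψ : E → ℝ} {L : ℝ}
    (hΔconv : Convex ℝ Δ) (hΨdiff : Differentiable ℝ Ψ)
    (hL : ∀ a ∈ Δ, ∀ b ∈ Δ, ‖fderiv ℝ Ψ a - fderiv ℝ Ψ b‖ ≤ L * ‖a - b‖)
    {a b : E} (ha : a ∈ Δ) (hb : b ∈ Δ) :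
    Ψ b ≤ Ψ a + fderiv ℝ Ψ a (b - a) + L / 2 * ‖b - a‖ ^ 2 := by
  set v := b - a with hv
  set c : ℝ → E := fun t => a + t • v with hc
  have hcmem : ∀ t ∈ Icc (0:ℝ) 1, c t ∈ Δ := by
    intro t ht
    have : c t = (1 - t) • a + t • b := by
      simp only [hc, hv]; module
    rw [this]
    exact hΔconv ha hb (by linarith [ht.1, ht.2]) ht.1 (by ring)
  set g : ℝ → ℝ := fun t => fderiv ℝ Ψ (c t) v with hg
  have hderiv : ∀ t : ℝ, HasDerivAt (fun s => Ψ (c s)) (g t) t := by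
    intro t
    have hct : HasDerivAt c v t :=
      ((hasDerivAt_id t).smul_const v).const_add a |>.congr_deriv (one_smul ℝ v)
    exact (hΨdiff (c t)).hasFDerivAt.comp_hasDerivAt t hct
  have hdist : ∀ s ∈ Icc (0:ℝ) 1, ∀ t ∈ Icc (0:ℝ) 1,
      dist (g s) (g t) ≤ (|L| * ‖v‖ ^ 2) * dist s t := by
    intro s hs t ht
    have h1 : dist (g s) (g t) = ‖(fderiv ℝ Ψ (c s) - fderiv ℝ Ψ (c t)) v‖ := by
      simp only [hg, Real.dist_eq, ContinuousLinearMap.sub_apply, Real.norm_eq_abs]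
    rw [h1]
    calc ‖(fderiv ℝ Ψ (c s) - fderiv ℝ Ψ (c t)) v‖
        ≤ ‖fderiv ℝ Ψ (c s) - fderiv ℝ Ψ (c t)‖ * ‖v‖ :=
          ContinuousLinearMap.le_opNorm _ _
      _ ≤ (L * ‖c s - c t‖) * ‖v‖ := by
          gcongr; exact hL _ (hcmem s hs) _ (hcmem t ht)
      _ ≤ (|L| * ‖v‖ ^ 2) * dist s t := by
          have : c s - c t = (s - t) • v := by simp only [hc]; module
          rw [this, norm_smul, Real.dist_eq, Real.norm_eq_abs]
          have hL' : L * (|s - t| * ‖v‖) * ‖v‖ ≤ |L| * (|s - t| * ‖v‖) * ‖v‖ := by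
            have : (0:ℝ) ≤ |s - t| * ‖v‖ * ‖v‖ := by positivity
            nlinarith [le_abs_self L]
          nlinarith [hL']
  have hgcont : ContinuousOn g (Icc 0 1) := by
    have : LipschitzOnWith (Real.toNNReal (|L| * ‖v‖ ^ 2)) g (Icc 0 1) := by
      apply LipschitzOnWith.of_dist_le_mul
      intro s hs t ht
      refine le_trans (hdist s hs t ht) ?_
      gcongr
      exact Real.le_coe_toNNReal _
    exact this.continuousOn
  have hInt : IntervalIntegrable g MeasureTheory.volume 0 1 := by
    apply ContinuousOn.intervalIntegrable
    rwa [Set.uIcc_of_le zero_le_one]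
  have hFTC : ∫ t in (0:ℝ)..1, g t = Ψ (c 1) - Ψ (c 0) := by
    apply intervalIntegral.integral_eq_sub_of_hasDerivAt (f := fun t => Ψ (c t))
    · intro t _; exact hderiv t
    · exact hInt
  have hmono : ∫ t in (0:ℝ)..1, g t ≤ ∫ t in (0:ℝ)..1, (g 0 + L * ‖v‖ ^ 2 * t) := by
    apply intervalIntegral.integral_mono_on zero_le_one hInt
    · apply ContinuousOn.intervalIntegrable
      exact (continuousOn_const.add (continuousOn_const.mul continuousOn_id))
    · intro t ht
      have h1 : g t - g 0 ≤ L * ‖v‖ ^ 2 * t := by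
        have h2 : g t - g 0 = (fderiv ℝ Ψ (c t) - fderiv ℝ Ψ (c 0)) v := by
          simp [hg, ContinuousLinearMap.sub_apply]
        calc g t - g 0 = (fderiv ℝ Ψ (c t) - fderiv ℝ Ψ (c 0)) v := h2
          _ ≤ ‖(fderiv ℝ Ψ (c t) - fderiv ℝ Ψ (c 0)) v‖ := le_abs_self _
          _ ≤ ‖fderiv ℝ Ψ (c t) - fderiv ℝ Ψ (c 0)‖ * ‖v‖ :=
              ContinuousLinearMap.le_opNorm _ _
          _ ≤ (L * ‖c t - c 0‖) * ‖v‖ := by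
              gcongr; exact hL _ (hcmem t ht) _ (hcmem 0 (left_mem_Icc.2 zero_le_one))
          _ = L * ‖v‖ ^ 2 * t := by
              have : c t - c 0 = t • v := by simp only [hc]; module
              rw [this, norm_smul, Real.norm_eq_abs, abs_of_nonneg ht.1]; ring
      linarith
  have hrhs : ∫ t in (0:ℝ)..1, (g 0 + L * ‖v‖ ^ 2 * t) = g 0 + L * ‖v‖ ^ 2 / 2 := by
    rw [intervalIntegral.integral_add intervalIntegrable_const]
    · rw [intervalIntegral.integral_const_mul, integral_id]
      simp; ring
    · exact (continuous_const.mul continuous_id).intervalIntegrable 0 1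
  have hc0 : c 0 = a := by simp [hc]
  have hc1 : c 1 = b := by simp [hc, hv]
  have hg0v : g 0 = fderiv ℝ Ψ a v := by rw [hg]; simp [hc0]
  rw [hFTC] at hmono
  rw [hrhs, hc0, hc1, hg0v] at hmono
  linarith

/-- Frank–Wolfe duality gap bound: `Ψ_N ≤ min_Δ Ψ` and
`Ψ(f^N) - min_Δ Ψ ≤ Ψ(f^N) - Ψ_N ≤ 2 L R² / (N+1)`. -/
theorem frank_wolfe_duality_gap
    {n : ℕ} {Δ : Set (EuclideanSpace ℝ (Fin n))}
    (hΔconv : Convex ℝ Δ) (hΔcomp : IsCompact Δ) (hΔne : Δ.Nonempty)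
    (Ψ : EuclideanSpace ℝ (Fin n) → ℝ)
    (hΨconv : ConvexOn ℝ Δ Ψ) (hΨdiff : Differentiable ℝ Ψ)
    (L : ℝ)
    (hL : ∀ a ∈ Δ, ∀ b ∈ Δ, ‖fderiv ℝ Ψ a - fderiv ℝ Ψ b‖ ≤ L * ‖a - b‖)
    (R : ℝ)
    (hR : IsGreatest {r : ℝ | ∃ a ∈ Δ, ∃ b ∈ Δ, r = ‖a - b‖ ^ 2} (R ^ 2))
    (γ : ℕ → ℝ) (hγ : ∀ k, γ k = 2 / ((k : ℝ) + 1))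
    (f y : ℕ → EuclideanSpace ℝ (Fin n))
    (hf0 : f 0 ∈ Δ)
    (hy : ∀ k, y k ∈ Δ ∧ ∀ z ∈ Δ, fderiv ℝ Ψ (f k) (y k) ≤ fderiv ℝ Ψ (f k) z)
    (hf1 : f 1 = y 0)
    (hfk : ∀ k ≥ 1, f (k + 1) = (1 - γ k) • f k + γ k • y k)
    (fstar : EuclideanSpace ℝ (Fin n)) (hstar : fstar ∈ Δ)
    (hmin : ∀ z ∈ Δ, Ψ fstar ≤ Ψ z)
    (N : ℕ) (hN : 1 ≤ N)
    (ΨN : ℝ)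
    (hΨN : ΨN = (Finset.range (N + 1)).sup' Finset.nonempty_range_add_one
        (fun k => Ψ (f k) + fderiv ℝ Ψ (f k) (y k - f k))) :
    ΨN ≤ Ψ fstar ∧
    Ψ (f N) - Ψ fstar ≤ Ψ (f N) - ΨN ∧
    Ψ (f N) - ΨN ≤ 2 * L * R ^ 2 / ((N : ℝ) + 1) := by
  have hmem : ∀ k, f k ∈ Δ := by
    intro k
    induction k with
    | zero => exact hf0
    | succ k ih =>
      rcases Nat.eq_zero_or_pos k with h | h
      · subst h; rw [hf1]; exact (hy 0).1
      · rw [hfk k h]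
        have hk1 : (1:ℝ) ≤ (k:ℝ) := by exact_mod_cast h
        have hγpos : 0 ≤ γ k := by rw [hγ]; positivity
        have hγle : γ k ≤ 1 := by
          rw [hγ, div_le_one (by linarith)]; linarith
        exact hΔconv ih (hy k).1 (by linarith) hγpos (by ring)
  have hℓ : ∀ k, k ≤ N → Ψ (f k) + fderiv ℝ Ψ (f k) (y k - f k) ≤ ΨN := by
    intro k hk
    rw [hΨN]
    exact Finset.le_sup' (fun k => Ψ (f k) + fderiv ℝ Ψ (f k) (y k - f k))
      (Finset.mem_range.mpr (Nat.lt_succ_of_le hk))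
  have part1 : ΨN ≤ Ψ fstar := by
    rw [hΨN]
    apply Finset.sup'_le
    intro k _
    have h1 : fderiv ℝ Ψ (f k) (y k - f k) ≤ fderiv ℝ Ψ (f k) (fstar - f k) := by
      rw [map_sub, map_sub]
      have := (hy k).2 fstar hstar
      linarith
    have h2 := fw_grad_ineq hΨconv hΨdiff (hmem k) hstar
    linarith
  refine ⟨part1, by linarith, ?_⟩
  have hR2 : ∀ a ∈ Δ, ∀ b ∈ Δ, ‖a - b‖ ^ 2 ≤ R ^ 2 := fun a ha b hb => hR.2 ⟨a, ha, b, hb, rfl⟩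
  by_cases hL0 : 0 ≤ L
  case neg =>
    have hsing : ∀ a ∈ Δ, ∀ b ∈ Δ, a = b := by
      intro a ha b hb
      by_contra hne
      have hpos : 0 < ‖a - b‖ := by
        rw [norm_pos_iff]; exact sub_ne_zero.mpr hne
      have := hL a ha b hb
      nlinarith [norm_nonneg (fderiv ℝ Ψ a - fderiv ℝ Ψ b)]
    have hRz : R ^ 2 = 0 := by
      obtain ⟨a, ha, b, hb, hab⟩ := hR.1
      rw [hab, hsing a ha b hb]; simp
    have hfconst : ∀ k, f k = f 0 := fun k => hsing _ (hmem k) _ hf0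
    have hyconst : ∀ k, y k = f 0 := fun k => hsing _ (hy k).1 _ hf0
    have hΨN0 : ΨN = Ψ (f 0) := by
      rw [hΨN]
      have he : (fun k => Ψ (f k) + fderiv ℝ Ψ (f k) (y k - f k)) = fun _ => Ψ (f 0) := by
        funext k; rw [hfconst k, hyconst k]; simp
      rw [he, Finset.sup'_const]
    rw [hΨN0, hfconst N, hRz]
    simp
  case pos =>
    have hR2nn : 0 ≤ R ^ 2 := by
      obtain ⟨a, ha, b, hb, hab⟩ := hR.1
      rw [hab]; positivity
    have hC : 0 ≤ L * R ^ 2 := mul_nonneg hL0 hR2nn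
    have key : ∀ k, 1 ≤ k → (k ≤ N → Ψ (f k) - ΨN ≤ 2 * (L * R ^ 2) / ((k:ℝ) + 1)) := by
      intro k hk
      induction k, hk using Nat.le_induction with
      | base =>
        intro _
        have hd := fw_descent hΔconv hΨdiff hL hf0 (hy 0).1
        have hb := hℓ 0 (by omega)
        have hr := hR2 (y 0) (hy 0).1 (f 0) hf0
        have e : L / 2 * ‖y 0 - f 0‖ ^ 2 ≤ L / 2 * R ^ 2 :=
          mul_le_mul_of_nonneg_left hr (by linarith)
        rw [hf1]
        push_cast
        norm_num
        linarith
      | succ k hk ih =>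
        intro hkN
        have hkN' : k ≤ N := by omega
        have ihk := ih hkN'
        have hK1 : (1:ℝ) ≤ (k:ℝ) := by exact_mod_cast hk
        set K := (k:ℝ) with hK
        have hγval : γ k = 2 / (K + 1) := hγ k
        have hγpos : 0 ≤ γ k := by rw [hγval]; positivity
        have hγle : γ k ≤ 1 := by
          rw [hγval, div_le_one (by linarith)]; linarith
        have hsub : f (k + 1) - f k = γ k • (y k - f k) := by
          rw [hfk k hk]; module
        have hd := fw_descent hΔconv hΨdiff hL (hmem k) (hmem (k + 1))
        rw [hsub] at hd
        have hde : fderiv ℝ Ψ (f k) (γ k • (y k - f k))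
            = γ k * fderiv ℝ Ψ (f k) (y k - f k) := by simp
        have hnorm : ‖γ k • (y k - f k)‖ ^ 2 = γ k ^ 2 * ‖y k - f k‖ ^ 2 := by
          rw [norm_smul, mul_pow, Real.norm_eq_abs, sq_abs]
        rw [hde, hnorm] at hd
        have hb := hℓ k hkN'
        have hr := hR2 (y k) (hy k).1 (f k) (hmem k)
        have e1 : γ k * fderiv ℝ Ψ (f k) (y k - f k) ≤ γ k * (ΨN - Ψ (f k)) :=
          mul_le_mul_of_nonneg_left (by linarith) hγpos
        have e2 : L / 2 * (γ k ^ 2 * ‖y k - f k‖ ^ 2) ≤ L / 2 * (γ k ^ 2 * R ^ 2) := by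
          apply mul_le_mul_of_nonneg_left _ (by linarith)
          exact mul_le_mul_of_nonneg_left hr (sq_nonneg _)
        have e3 : Ψ (f (k + 1)) - ΨN ≤ (1 - γ k) * (Ψ (f k) - ΨN)
            + L / 2 * (γ k ^ 2 * R ^ 2) := by nlinarith [hd, e1, e2]
        have e4 : (1 - γ k) * (Ψ (f k) - ΨN) ≤ (1 - γ k) * (2 * (L * R ^ 2) / (K + 1)) :=
          mul_le_mul_of_nonneg_left ihk (by linarith)
        have hK0 : (0:ℝ) < K + 1 := by linarith
        have hK2 : (0:ℝ) < K + 2 := by linarith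
        have harith : (1 - γ k) * (2 * (L * R ^ 2) / (K + 1))
            + L / 2 * (γ k ^ 2 * R ^ 2) ≤ 2 * (L * R ^ 2) / (K + 2) := by
          rw [hγval]
          have h1 : (1 - 2 / (K + 1)) * (2 * (L * R ^ 2) / (K + 1))
              + L / 2 * ((2 / (K + 1)) ^ 2 * R ^ 2)
              = 2 * (L * R ^ 2) * K / (K + 1) ^ 2 := by
            field_simp
            ring
          rw [h1, div_le_div_iff₀ (by positivity) hK2]
          have h2 : 2 * (L * R ^ 2) * (K + 1) ^ 2 - 2 * (L * R ^ 2) * K * (K + 2)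
              = 2 * (L * R ^ 2) := by ring
          linarith [hC, h2]
        push_cast
        have : ((k:ℝ) + 1 + 1) = K + 2 := by rw [hK]; ring
        rw [this]
        linarith
    have hfin := key N hN le_rfl
    have he : 2 * (L * R ^ 2) / ((N:ℝ) + 1) = 2 * L * R ^ 2 / ((N:ℝ) + 1) := by ring
    linarith
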